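/- arXiv:1212.3649 — 2 statements merged into one kernel-verified Lean document; each statement's English description precedes it below -/
import Mathlib

section
/- For f(x) = -x²/2 + log cosh(x) (the Curie-Weiss case J = 1, h = 0), the point 0 is the unique global maximum point, and the Taylor expansion of f at 0 satisfies f(x) = -x⁴/12 + o(x⁴); i.e. f has type k = 2 and strength λ = -2 at 0. -/
open Real Filter Asymptotics

open Topology

/-! Comparing the series `cosh x = ∑ x^(2n)/(2n)!` and `exp (x²/2) = ∑ x^(2n)/(2ⁿ n!)` termwise,
with strict inequality at `n = 2`, gives `log (cosh x) < x²/2` for `x ≠ 0`, so `0` is the unique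
maximum point. For the expansion, little-o bounds are integrated twice by the mean value theorem:
`tanh x - x = o(x)` makes `(tanh x - x + x³/3)' = x² - tanh² x = o(x²)`, hence
`tanh x - x + x³/3 = o(x³)`, and this is the derivative of `log (cosh x) - x²/2 + x⁴/12`. -/

theorem isLittleO_pow_succ_of_hasDerivAt {E : Type*} [NormedAddCommGroup E] [NormedSpace ℝ E]
    {f f' : ℝ → E} {x₀ : ℝ} {n : ℕ} (hf : ∀ x, HasDerivAt f (f' x) x)
    (hf' : f' =o[𝓝 x₀] fun x => (x - x₀) ^ n) :
    (fun x => f x - f x₀) =o[𝓝 x₀] fun x => (x - x₀) ^ (n + 1) := by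
  rw [← nhdsWithin_univ] at hf' ⊢
  exact convex_univ.isLittleO_pow_succ_real (Set.mem_univ x₀)
    (fun x _ => (hf x).hasDerivWithinAt) hf'

namespace Real

lemma cosh_lt_exp_half_sq {x : ℝ} (hx : x ≠ 0) : cosh x < exp (x ^ 2 / 2) := by
  rw [cosh_eq_tsum, exp_eq_exp_ℝ, NormedSpace.exp_eq_tsum ℝ]
  refine x.hasSum_cosh.summable.tsum_lt_tsum (i := 2) (fun i => ?_) ?_
    (NormedSpace.expSeries_summable' (x ^ 2 / 2))
  all_goals simp only [div_pow, pow_mul, smul_eq_mul, inv_mul_eq_div, div_div]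
  · gcongr
    exact_mod_cast Nat.two_pow_mul_factorial_le_factorial_two_mul _
  · have hx2 : 0 < x ^ 2 := by positivity
    norm_num [Nat.factorial]
    nlinarith [pow_pos hx2 2]

lemma log_cosh_lt_half_sq {x : ℝ} (hx : x ≠ 0) : log (cosh x) < x ^ 2 / 2 := by
  simpa using log_lt_log (cosh_pos x) (cosh_lt_exp_half_sq hx)

lemma hasDerivAt_tanh (x : ℝ) : HasDerivAt tanh (1 - tanh x ^ 2) x := by
  rw [show tanh = fun y => sinh y / cosh y from funext tanh_eq_sinh_div_cosh]
  refine ((hasDerivAt_sinh x).div (hasDerivAt_cosh x) (cosh_pos x).ne').congr_deriv ?_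
  field_simp

lemma isLittleO_tanh_sub_self : (fun x => tanh x - x) =o[𝓝 0] fun x => x := by
  simpa [hasDerivAt_iff_isLittleO] using hasDerivAt_tanh 0

lemma isLittleO_sq_sub_tanh_sq : (fun x => x ^ 2 - tanh x ^ 2) =o[𝓝 0] fun x => x ^ 2 := by
  have hsum : (fun x => x + tanh x) =O[𝓝 0] fun x => x :=
    ((isBigO_refl _ _).const_mul_left 2).add isLittleO_tanh_sub_self.isBigO |>.congr_left
      fun x => by ring
  simpa [pow_two] using (isLittleO_tanh_sub_self.neg_left.mul_isBigO hsum).congr_left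
    fun x => by ring

lemma isLittleO_tanh_sub_taylor :
    (fun x => tanh x - (x - x ^ 3 / 3)) =o[𝓝 0] fun x => x ^ 3 := by
  have hderiv (x : ℝ) : HasDerivAt (fun x => tanh x - (x - x ^ 3 / 3)) (x ^ 2 - tanh x ^ 2) x := by
    refine ((hasDerivAt_tanh x).sub ((hasDerivAt_id x).sub
      ((hasDerivAt_pow 3 x).div_const 3))).congr_deriv ?_
    push_cast
    ring
  simpa using isLittleO_pow_succ_of_hasDerivAt (x₀ := 0) hderiv
    (by simpa using isLittleO_sq_sub_tanh_sq)

lemma isLittleO_log_cosh_sub_taylor :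
    (fun x => log (cosh x) - (x ^ 2 / 2 - x ^ 4 / 12)) =o[𝓝 0] fun x => x ^ 4 := by
  have hderiv (x : ℝ) : HasDerivAt (fun x => log (cosh x) - (x ^ 2 / 2 - x ^ 4 / 12))
      (tanh x - (x - x ^ 3 / 3)) x := by
    refine (((hasDerivAt_cosh x).log (cosh_pos x).ne').sub (((hasDerivAt_pow 2 x).div_const 2).sub
      ((hasDerivAt_pow 4 x).div_const 12))).congr_deriv ?_
    rw [tanh_eq_sinh_div_cosh]
    push_cast
    ring
  simpa using isLittleO_pow_succ_of_hasDerivAt (x₀ := 0) hderiv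
    (by simpa using isLittleO_tanh_sub_taylor)

end Real

theorem stmt_8 (f : ℝ → ℝ) (hf : ∀ x, f x = -x ^ 2 / 2 + Real.log (Real.cosh x)) :
    (∀ x, f x ≤ f 0) ∧ (∀ μ : ℝ, (∀ x, f x ≤ f μ) → μ = 0) ∧
    (fun x : ℝ => f x - (f 0 + (-2) * x ^ 4 / (Nat.factorial 4))) =o[nhds 0]
      fun x : ℝ => x ^ 4 := by
  have hf0 : f 0 = 0 := by simp [hf]
  have hlt {x : ℝ} (hx : x ≠ 0) : f x < f 0 := by
    rw [hf, hf0]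
    linarith [log_cosh_lt_half_sq hx]
  refine ⟨fun x => ?_, fun μ hμ => ?_, ?_⟩
  · rcases eq_or_ne x 0 with rfl | hx
    · rfl
    · exact (hlt hx).le
  · by_contra hμ0
    exact (hμ 0).not_gt (hlt hμ0)
  · refine isLittleO_log_cosh_sub_taylor.congr_left fun x => ?_
    rw [hf, hf0]
    norm_num [Nat.factorial]
    ring
end

section
/- Let f : ℝⁿ → ℝ be continuous with ∫_{ℝⁿ} exp(f(x)) dx < ∞ and maximum F = f(μ) attained at μ. Then ∫ exp(N f(x)) dx < ∞ for every N ≥ 1, and (1/N) log ∫_{ℝⁿ} exp(N f(x)) dx → f(μ) as N → ∞. -/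
/-!
Since `f ≤ f μ`, the integrand factors as `exp (t f) ≤ exp ((t - 1) f μ) * exp f`, which gives
integrability for `t ≥ 1` and `(1/t) log ∫ exp (t f) ≤ f μ + O(1/t)`. Conversely, for `a < f μ`
continuity gives a neighbourhood `U` of `μ` of finite positive measure on which `f > a`, so
`∫ exp (t f) ≥ vol U * exp (t a)` and `(1/t) log ∫ exp (t f) ≥ a + O(1/t)`.
-/

open MeasureTheory Real Filter Topology

variable {X : Type*} [MeasurableSpace X] {ν : Measure X} {f : X → ℝ}

lemma exp_mul_le_exp_mul_sub_one_mul_exp {F t y : ℝ} (hy : y ≤ F) (ht : 1 ≤ t) :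
    exp (t * y) ≤ exp ((t - 1) * F) * exp y := by
  rw [← exp_add]
  gcongr
  nlinarith

lemma integrable_exp_mul_of_le {F t : ℝ} (hint : Integrable (fun x => exp (f x)) ν)
    (hle : ∀ x, f x ≤ F) (ht : 1 ≤ t) : Integrable (fun x => exp (t * f x)) ν := by
  have hf : AEMeasurable f ν := by
    simpa only [log_exp] using hint.aemeasurable.log
  refine (hint.const_mul (exp ((t - 1) * F))).mono' (hf.const_mul t).exp.aestronglyMeasurable ?_
  filter_upwards with x
  rw [norm_of_nonneg (exp_pos _).le]
  exact exp_mul_le_exp_mul_sub_one_mul_exp (hle x) ht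

lemma integral_exp_mul_le {F t : ℝ} (hint : Integrable (fun x => exp (f x)) ν)
    (hle : ∀ x, f x ≤ F) (ht : 1 ≤ t) :
    ∫ x, exp (t * f x) ∂ν ≤ exp ((t - 1) * F) * ∫ x, exp (f x) ∂ν := by
  rw [← integral_const_mul]
  exact integral_mono (integrable_exp_mul_of_le hint hle ht) (hint.const_mul _)
    fun x => exp_mul_le_exp_mul_sub_one_mul_exp (hle x) ht

section Topological

variable [TopologicalSpace X] [OpensMeasurableSpace X] [ν.IsOpenPosMeasure]
  [IsLocallyFiniteMeasure ν] {x₀ : X}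

lemma exists_pos_mul_exp_mul_le_integral (hf : ContinuousAt f x₀) {a : ℝ} (ha : a < f x₀) :
    ∃ c > 0, ∀ t, 0 ≤ t → Integrable (fun x => exp (t * f x)) ν →
      c * exp (t * a) ≤ ∫ x, exp (t * f x) ∂ν := by
  obtain ⟨s, hs, hνs⟩ := ν.finiteAt_nhds x₀
  set U := interior (s ∩ {x | a < f x})
  have hU : U ∈ 𝓝 x₀ := interior_mem_nhds.2 (inter_mem hs (hf.eventually_const_lt ha))
  have hνU : ν U < ⊤ := (measure_mono (interior_subset.trans Set.inter_subset_left)).trans_lt hνs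
  refine ⟨ν.real U, ENNReal.toReal_pos (ν.measure_pos_of_mem_nhds hU).ne' hνU.ne,
    fun t ht hint => ?_⟩
  calc ν.real U * exp (t * a) ≤ ∫ x in U, exp (t * f x) ∂ν := by
        rw [mul_comm]
        refine setIntegral_ge_of_const_le_real isOpen_interior.measurableSet hνU.ne
          (fun x hx => ?_) hint.integrableOn
        have : a < f x := (interior_subset hx).2
        gcongr
    _ ≤ ∫ x, exp (t * f x) ∂ν :=
        setIntegral_le_integral hint (.of_forall fun x => (exp_pos _).le)

theorem tendsto_one_div_mul_log_integral_exp_mul (hf : ContinuousAt f x₀)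
    (hint : Integrable (fun x => exp (f x)) ν) (hmax : ∀ x, f x ≤ f x₀) :
    Tendsto (fun t : ℝ => 1 / t * log (∫ x, exp (t * f x) ∂ν)) atTop (𝓝 (f x₀)) := by
  have : Nonempty X := ⟨x₀⟩
  refine tendsto_order.2 ⟨fun a ha => ?_, fun b hb => ?_⟩
  · obtain ⟨a', haa', ha'⟩ := exists_between ha
    obtain ⟨c, hc, hlow⟩ := exists_pos_mul_exp_mul_le_integral (ν := ν) hf ha'
    have hlim : Tendsto (fun t : ℝ => log c / t + a') atTop (𝓝 a') := by
      simpa using (tendsto_const_nhds.div_atTop tendsto_id).add_const a'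
    filter_upwards [hlim.eventually (eventually_gt_nhds haa'), eventually_ge_atTop 1]
      with t hlt ht
    have ht0 : 0 < t := by linarith
    calc a < log c / t + a' := hlt
      _ = 1 / t * log (c * exp (t * a')) := by
        rw [log_mul hc.ne' (exp_ne_zero _), log_exp]; field_simp
      _ ≤ 1 / t * log (∫ x, exp (t * f x) ∂ν) := by
        gcongr
        exact hlow t ht0.le (integrable_exp_mul_of_le hint hmax ht)
  · set C := log (∫ x, exp (f x) ∂ν)
    have hlim : Tendsto (fun t : ℝ => f x₀ + (C - f x₀) / t) atTop (𝓝 (f x₀)) := by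
      simpa using (tendsto_const_nhds.div_atTop tendsto_id).const_add (f x₀)
    filter_upwards [hlim.eventually (eventually_lt_nhds hb), eventually_ge_atTop 1]
      with t hlt ht
    have ht0 : 0 < t := by linarith
    have hint_t := integrable_exp_mul_of_le hint hmax ht
    calc 1 / t * log (∫ x, exp (t * f x) ∂ν)
        ≤ 1 / t * log (exp ((t - 1) * f x₀) * ∫ x, exp (f x) ∂ν) := by
          gcongr
          exacts [integral_exp_pos hint_t, integral_exp_mul_le hint hmax ht]
      _ = f x₀ + (C - f x₀) / t := by
          rw [log_mul (exp_ne_zero _) (integral_exp_pos hint).ne', log_exp]; field_simp; ring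
      _ < b := hlt

end Topological

theorem stmt_16 (n : ℕ) (f : (Fin n → ℝ) → ℝ) (hc : Continuous f)
    (hint : Integrable (fun x => Real.exp (f x)) volume)
    (μ : Fin n → ℝ) (hmax : ∀ x, f x ≤ f μ) :
    (∀ N : ℕ, 1 ≤ N → Integrable (fun x => Real.exp (N * f x)) volume) ∧
    Tendsto (fun N : ℕ => (1 / (N : ℝ)) * Real.log (∫ x, Real.exp (N * f x)))
      atTop (nhds (f μ)) :=
  ⟨fun _ hN => integrable_exp_mul_of_le hint hmax (by exact_mod_cast hN),
    (tendsto_one_div_mul_log_integral_exp_mul hc.continuousAt hint hmax).comp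
      tendsto_natCast_atTop_atTop⟩
end
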